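/- arXiv:2510.20781 — 2 statements merged into one kernel-verified Lean document; each statement's English description precedes it below -/
import Mathlib

section
/- Let D_c, β, D₀, λ, α₀, ρ*, g'_*, u*, k > 0 and D'₀ ∈ ℝ, and define the dispersion polynomial P(σ) = (σ + D_c k² + β)(σ + D₀k²)(σ + D₀k² + λ) − α₀g'_*ρ*·(σ + (D₀ − u*D'₀)k²). If D'₀ < −(D₀/u*)·[ (D_c k² + β)(D₀k² + λ)/(α₀ρ*g'_*) − 1 ], then P has a real root σ > 0. That is, when motility is sufficiently repressed at steady state, the spatially uniform steady state admits a positive real growth rate and is linearly unstable. -/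
/-!
`P` is a monic cubic, so it tends to `+∞`; the motility condition, after clearing the
positive denominators `u*` and `α₀ρ*g'_*`, says exactly that `P(0) < 0`. The intermediate value
theorem on `[0, ∞)` then gives a positive root.
-/

open Filter Polynomial

theorem exists_pos_eq_zero_of_neg_of_tendsto_atTop {f : ℝ → ℝ} (hf : Continuous f)
    (h0 : f 0 < 0) (htop : Tendsto f atTop atTop) : ∃ x, 0 < x ∧ f x = 0 :=
  intermediate_value_Ioi hf.continuousOn htop h0

theorem tendsto_cubic_sub_linear_atTop (a b c A d : ℝ) :
    Tendsto (fun x => (x + a) * (x + b) * (x + c) - A * (x + d)) atTop atTop := by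
  let p : ℝ[X] := (X + C a) * (X + C b) * (X + C c) - C A * (X + C d)
  have hmonic : p.Monic := by unfold p; monicity!
  have hdeg : p.natDegree = 3 := by unfold p; compute_degree!
  simpa [p] using p.tendsto_atTop_of_leadingCoeff_nonneg
    (natDegree_pos_iff_degree_pos.mp (by omega)) (by rw [hmonic.leadingCoeff]; exact zero_le_one)

theorem mul_lt_mul_sub_of_lt_neg_div_mul {X A D₀ u D₀' : ℝ} (hA : 0 < A) (hu : 0 < u)
    (h : D₀' < -(D₀ / u) * (X / A - 1)) : D₀ * X < A * (D₀ - u * D₀') := by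
  have h' := mul_lt_mul_of_pos_left h hu
  field_simp at h'
  nlinarith

theorem repressed_motility_implies_instability_general
    (Dc beta D0 lam alpha0 rhostar gstar ustar k : ℝ) (D0' : ℝ)
    (halpha : 0 < alpha0) (hrho : 0 < rhostar) (hg : 0 < gstar)
    (hustar : 0 < ustar) (hk : 0 < k)
    (P : ℝ → ℝ)
    (hP : P = fun σ =>
      (σ + Dc * k ^ 2 + beta) * (σ + D0 * k ^ 2) * (σ + D0 * k ^ 2 + lam)
        - alpha0 * gstar * rhostar * (σ + (D0 - ustar * D0') * k ^ 2))
    (hcrit : D0' < -(D0 / ustar) *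
      ((Dc * k ^ 2 + beta) * (D0 * k ^ 2 + lam) / (alpha0 * rhostar * gstar) - 1)) :
    ∃ σ : ℝ, 0 < σ ∧ P σ = 0 := by
  subst hP
  have hcrit' := mul_lt_mul_sub_of_lt_neg_div_mul (by positivity) hustar hcrit
  have hP0 : (0 + Dc * k ^ 2 + beta) * (0 + D0 * k ^ 2) * (0 + D0 * k ^ 2 + lam)
      - alpha0 * gstar * rhostar * (0 + (D0 - ustar * D0') * k ^ 2)
      = k ^ 2 * (D0 * ((Dc * k ^ 2 + beta) * (D0 * k ^ 2 + lam))
        - alpha0 * rhostar * gstar * (D0 - ustar * D0')) := by ring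
  refine exists_pos_eq_zero_of_neg_of_tendsto_atTop (by fun_prop) ?_ ?_
  · rw [hP0]
    exact mul_neg_of_pos_of_neg (by positivity) (by linarith)
  · simpa only [add_assoc] using tendsto_cubic_sub_linear_atTop _ _ _ _ _

/-- If motility is sufficiently repressed at steady state, i.e.
`D'₀ < −(D₀/u*)·[(D_ck²+β)(D₀k²+λ)/(α₀ρ*g'_*) − 1]`, then the dispersion polynomial
`P(σ) = (σ+D_ck²+β)(σ+D₀k²)(σ+D₀k²+λ) − α₀g'_*ρ*(σ+(D₀−u*D'₀)k²)` has a real root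
`σ > 0`, so the spatially uniform steady state is linearly unstable. -/
theorem repressed_motility_implies_instability
    (Dc beta D0 lam alpha0 rhostar gstar ustar k : ℝ) (D0' : ℝ)
    (hDc : 0 < Dc) (hbeta : 0 < beta) (hD0 : 0 < D0) (hlam : 0 < lam)
    (halpha : 0 < alpha0) (hrho : 0 < rhostar) (hg : 0 < gstar)
    (hustar : 0 < ustar) (hk : 0 < k)
    (P : ℝ → ℝ)
    (hP : P = fun σ =>
      (σ + Dc * k ^ 2 + beta) * (σ + D0 * k ^ 2) * (σ + D0 * k ^ 2 + lam)
        - alpha0 * gstar * rhostar * (σ + (D0 - ustar * D0') * k ^ 2))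
    (hcrit : D0' < -(D0 / ustar) *
      ((Dc * k ^ 2 + beta) * (D0 * k ^ 2 + lam) / (alpha0 * rhostar * gstar) - 1)) :
    ∃ σ : ℝ, 0 < σ ∧ P σ = 0 :=
  repressed_motility_implies_instability_general Dc beta D0 lam alpha0 rhostar gstar ustar k D0'
    halpha hrho hg hustar hk P hP hcrit
end

section
/- Let ε, λ, α₀, g'_* > 0, u* ∈ ℝ, k ∈ ℝ, and 𝒟₀ : (0, ∞) → ℝ continuous. Let n*(u) = ρ*·√(λ/(2πε))·exp(−λ(u−u*)²/(2ε)), and let η, W : (0, ∞) → ℝ be twice continuously differentiable functions satisfying, for all u > 0: ε·η″ + d/du[λ(u−u*)η] − 𝒟₀(u)k²·η = g'_*·(n*)′ and ε·W″ − λ(u−u*)·W′ − 𝒟₀(u)k²·W = −α₀·u. Assume the functions u·η(u) and (n*)′(u)·W(u) are (Lebesgue) integrable on (0, ∞), and that the bilinear concomitant B(u) = ε(η′(u)W(u) − η(u)W′(u)) + λ(u−u*)·η(u)·W(u) tends to 0 as u → 0⁺ and as u → ∞. Then α₀·∫₀^∞ u·η(u) du = −g'_*·∫₀^∞ (n*)′(u)·W(u)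 du. Consequently the solvability condition D_ck² + β = α₀∫₀^∞ uη du of the linear problem is equivalent to the adjoint condition D_ck² + β + g'_*∫₀^∞ (n*)′W du = 0. -/
/-!
Along solutions, the bilinear concomitant `B = ε(η′W − ηW′) + λ(u − u*)ηW` has derivative
`g'_*(n*)′W + α₀uη` (Lagrange's identity: the second-order and `𝒟₀k²` terms cancel between the
direct and the adjoint equation). Integrating over `(0, ∞)`, where `B` vanishes at both ends, gives
`g'_*∫(n*)′W + α₀∫uη = 0`, and both solvability conditions are this identity in disguise.
-/

open Real Set Filter MeasureTheory Topology

theorem integral_Ioi_of_hasDerivAt_of_tendsto_nhdsGT {E : Type*} [NormedAddCommGroup E]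
    [NormedSpace ℝ E] [CompleteSpace E] {f f' : ℝ → E} {a : ℝ} {l m : E}
    (hderiv : ∀ x ∈ Ioi a, HasDerivAt f (f' x) x) (f'int : IntegrableOn f' (Ioi a))
    (hleft : Tendsto f (𝓝[>] a) (𝓝 l)) (htop : Tendsto f atTop (𝓝 m)) :
    ∫ x in Ioi a, f' x = m - l := by
  set g := Function.update f a l with hg
  have hfg : EqOn f g (Ioi a) := fun x hx => (Function.update_of_ne hx.ne' l f).symm
  have hcont : ContinuousWithinAt g (Ici a) a := by
    rw [← continuousWithinAt_Ioi_iff_Ici, ContinuousWithinAt, hg, Function.update_self]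
    exact hleft.congr' (eventuallyEq_nhdsWithin_of_eqOn hfg)
  have hderiv' (x : ℝ) (hx : x ∈ Ioi a) : HasDerivAt g (f' x) x :=
    (hderiv x hx).congr_of_eventuallyEq
      (hfg.symm.eventuallyEq_of_mem (isOpen_Ioi.mem_nhds hx))
  have htop' : Tendsto g atTop (𝓝 m) :=
    htop.congr' (hfg.eventuallyEq_of_mem (Ioi_mem_atTop a))
  simpa [g] using integral_Ioi_of_hasDerivAt_of_tendsto hcont hderiv' f'int htop'

theorem hasDerivAt_concomitant {a η η₁ W W₁ : ℝ → ℝ} {ε c f h x a' η₂ W₂ : ℝ}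
    (ha : HasDerivAt a a' x) (hη : HasDerivAt η (η₁ x) x) (hη₁ : HasDerivAt η₁ η₂ x)
    (hW : HasDerivAt W (W₁ x) x) (hW₁ : HasDerivAt W₁ W₂ x)
    (hηeq : ε * η₂ + (a' * η x + a x * η₁ x) - c * η x = f)
    (hWeq : ε * W₂ - a x * W₁ x - c * W x = h) :
    HasDerivAt (fun v => ε * (η₁ v * W v - η v * W₁ v) + a v * η v * W v)
      (f * W x - η x * h) x :=
  ((((hη₁.mul hW).sub (hη.mul hW₁)).const_mul ε).add ((ha.mul hη).mul hW)).congr_deriv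
    (by simp only [Pi.mul_apply]; linear_combination W x * hηeq - η x * hWeq)

theorem direct_adjoint_solvability_equivalence_general
    (eps lam alpha0 gstar Dc beta : ℝ)
    (ustar k : ℝ)
    (D0 : ℝ → ℝ)
    (nstar η W : ℝ → ℝ)
    -- η, W twice continuously differentiable on (0,∞)
    (hηd : ∀ u ∈ Ioi (0 : ℝ), DifferentiableAt ℝ η u)
    (hηd' : ∀ u ∈ Ioi (0 : ℝ), DifferentiableAt ℝ (deriv η) u)
    (hWd : ∀ u ∈ Ioi (0 : ℝ), DifferentiableAt ℝ W u)
    (hWd' : ∀ u ∈ Ioi (0 : ℝ), DifferentiableAt ℝ (deriv W) u)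
    -- the two differential equations
    (hηeq : ∀ u ∈ Ioi (0 : ℝ),
      eps * deriv (deriv η) u + deriv (fun v => lam * (v - ustar) * η v) u
          - D0 u * k ^ 2 * η u = gstar * deriv nstar u)
    (hWeq : ∀ u ∈ Ioi (0 : ℝ),
      eps * deriv (deriv W) u - lam * (u - ustar) * deriv W u
          - D0 u * k ^ 2 * W u = -alpha0 * u)
    -- integrability
    (hint1 : IntegrableOn (fun u => u * η u) (Ioi 0))
    (hint2 : IntegrableOn (fun u => deriv nstar u * W u) (Ioi 0))
    -- bilinear concomitant vanishes at both ends
    (B : ℝ → ℝ)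
    (hB : B = fun u =>
      eps * (deriv η u * W u - η u * deriv W u) + lam * (u - ustar) * η u * W u)
    (hB0 : Tendsto B (nhdsWithin 0 (Ioi 0)) (nhds 0))
    (hBtop : Tendsto B atTop (nhds 0)) :
    alpha0 * (∫ u in Ioi (0 : ℝ), u * η u)
        = -gstar * ∫ u in Ioi (0 : ℝ), deriv nstar u * W u ∧
    ((Dc * k ^ 2 + beta = alpha0 * ∫ u in Ioi (0 : ℝ), u * η u) ↔
      (Dc * k ^ 2 + beta + gstar * (∫ u in Ioi (0 : ℝ), deriv nstar u * W u) = 0)) := by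
  have hB' (u : ℝ) (hu : u ∈ Ioi 0) :
      HasDerivAt B (gstar * (deriv nstar u * W u) + alpha0 * (u * η u)) u := by
    have hdrift : HasDerivAt (fun v => lam * (v - ustar)) lam u := by
      simpa using ((hasDerivAt_id u).sub_const ustar).const_mul lam
    have hη := (hηd u hu).hasDerivAt
    have hflux : HasDerivAt (fun v => lam * (v - ustar) * η v)
        (lam * η u + lam * (u - ustar) * deriv η u) u := hdrift.mul hη
    have hηeq' := hηeq u hu
    rw [hflux.deriv] at hηeq'
    rw [hB]
    exact (hasDerivAt_concomitant hdrift hη (hηd' u hu).hasDerivAt (hWd u hu).hasDerivAt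
      (hWd' u hu).hasDerivAt hηeq' (hWeq u hu)).congr_deriv (by ring)
  have hzero := integral_Ioi_of_hasDerivAt_of_tendsto_nhdsGT hB'
    ((hint2.const_mul gstar).add (hint1.const_mul alpha0)) hB0 hBtop
  rw [integral_add (hint2.const_mul gstar) (hint1.const_mul alpha0), integral_const_mul,
    integral_const_mul, sub_zero] at hzero
  exact ⟨by linarith, by constructor <;> intro h <;> linarith⟩

/-- Lagrange-identity equivalence of the direct and adjoint solvability
conditions: if `η` solves the linearised equation with source `g'_*(n*)′`, `W` solves
the adjoint equation with source `−α₀u`, the relevant integrands are integrable and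
the bilinear concomitant vanishes at both ends of `(0,∞)`, then
`α₀∫₀^∞ uη = −g'_*∫₀^∞ (n*)′W`, so `D_ck² + β = α₀∫₀^∞ uη` iff
`D_ck² + β + g'_*∫₀^∞ (n*)′W = 0`. -/
theorem direct_adjoint_solvability_equivalence
    (eps lam alpha0 gstar rhostar Dc beta : ℝ)
    (heps : 0 < eps) (hlam : 0 < lam) (halpha : 0 < alpha0) (hg : 0 < gstar)
    (hrho : 0 < rhostar)
    (ustar k : ℝ)
    (D0 : ℝ → ℝ) (hD0 : ContinuousOn D0 (Ioi 0))
    (nstar η W : ℝ → ℝ)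
    (hnstar : nstar = fun u =>
      rhostar * Real.sqrt (lam / (2 * π * eps)) *
        Real.exp (-lam * (u - ustar) ^ 2 / (2 * eps)))
    -- η, W twice continuously differentiable on (0,∞)
    (hηd : ∀ u ∈ Ioi (0 : ℝ), DifferentiableAt ℝ η u)
    (hηd' : ∀ u ∈ Ioi (0 : ℝ), DifferentiableAt ℝ (deriv η) u)
    (hηc : ContinuousOn (deriv (deriv η)) (Ioi 0))
    (hWd : ∀ u ∈ Ioi (0 : ℝ), DifferentiableAt ℝ W u)
    (hWd' : ∀ u ∈ Ioi (0 : ℝ), DifferentiableAt ℝ (deriv W) u)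
    (hWc : ContinuousOn (deriv (deriv W)) (Ioi 0))
    -- the two differential equations
    (hηeq : ∀ u ∈ Ioi (0 : ℝ),
      eps * deriv (deriv η) u + deriv (fun v => lam * (v - ustar) * η v) u
          - D0 u * k ^ 2 * η u = gstar * deriv nstar u)
    (hWeq : ∀ u ∈ Ioi (0 : ℝ),
      eps * deriv (deriv W) u - lam * (u - ustar) * deriv W u
          - D0 u * k ^ 2 * W u = -alpha0 * u)
    -- integrability
    (hint1 : IntegrableOn (fun u => u * η u) (Ioi 0))
    (hint2 : IntegrableOn (fun u => deriv nstar u * W u) (Ioi 0))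
    -- bilinear concomitant vanishes at both ends
    (B : ℝ → ℝ)
    (hB : B = fun u =>
      eps * (deriv η u * W u - η u * deriv W u) + lam * (u - ustar) * η u * W u)
    (hB0 : Tendsto B (nhdsWithin 0 (Ioi 0)) (nhds 0))
    (hBtop : Tendsto B atTop (nhds 0)) :
    alpha0 * (∫ u in Ioi (0 : ℝ), u * η u)
        = -gstar * ∫ u in Ioi (0 : ℝ), deriv nstar u * W u ∧
    ((Dc * k ^ 2 + beta = alpha0 * ∫ u in Ioi (0 : ℝ), u * η u) ↔
      (Dc * k ^ 2 + beta + gstar * (∫ u in Ioi (0 : ℝ), deriv nstar u * W u) = 0)) :=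
  direct_adjoint_solvability_equivalence_general eps lam alpha0 gstar Dc beta ustar k D0 nstar η W
    hηd hηd' hWd hWd' hηeq hWeq hint1 hint2 B hB hB0 hBtop
end
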